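/- arXiv:1808.04732 — 2 statements merged into one kernel-verified Lean document; each statement's English description precedes it below -/
import Mathlib

section
/- Let T, S, and R be perfect trees. Then (T ∪ S) ∧ R = (T ∧ R) ∪ (S ∧ R); that is, the meet operation distributes over unions of perfect trees. -/
/-- A tree: a set of finite binary strings closed under initial segments (prefixes). -/
def IsTree (T : Set (List Bool)) : Prop :=
  ∀ ⦃s t : List Bool⦄, s <+: t → t ∈ T → s ∈ T

/-- A node `t` splits in a set `A` of strings if both one-step extensions belong to `A`. -/
def Splits (A : Set (List Bool)) (t : List Bool) : Prop :=
  t ++ [false] ∈ A ∧ t ++ [true] ∈ A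

/-- A perfect tree: a nonempty tree each of whose elements has a splitting extension in it. -/
def IsPerfect (T : Set (List Bool)) : Prop :=
  T.Nonempty ∧ IsTree T ∧ ∀ s ∈ T, ∃ t ∈ T, s <+: t ∧ Splits T t

/-- The cone `C_s`: all strings comparable with `s`. -/
def Cone (s : List Bool) : Set (List Bool) :=
  {t | s <+: t ∨ t <+: s}

/-- `T_s`: the elements of `T` comparable with `s`. -/
def restrictTo (T : Set (List Bool)) (s : List Bool) : Set (List Bool) :=
  {t ∈ T | s <+: t ∨ t <+: s}

/-- The meet `A ∧ B`: the union of all perfect trees contained in `A ∩ B`. -/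
def meet (A B : Set (List Bool)) : Set (List Bool) :=
  ⋃₀ {U | IsPerfect U ∧ U ⊆ A ∩ B}

/-!
A perfect tree `U ⊆ (T ∪ S) ∩ R` through `x` either has a node `y ⊒ x` above which it stays
inside `T`, or, failing that, every node of `U` above `x` has an extension in `U \ T ⊆ S`, so lies
in the tree `S`. In either case the restriction of `U` to that node is a perfect subtree of `T ∩ R`
or `S ∩ R` containing `x`.
-/

theorem isPerfect_restrictTo {U : Set (List Bool)} (hU : IsPerfect U) {y : List Bool}
    (hy : y ∈ U) : IsPerfect (restrictTo U y) := by
  obtain ⟨-, hUtree, hUsplit⟩ := hU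
  have splits_of_above : ∀ t ∈ U, y <+: t → Splits U t → Splits (restrictTo U y) t :=
    fun t _ hyt ⟨hf, ht⟩ =>
      ⟨⟨hf, Or.inl (hyt.trans (List.prefix_append _ _))⟩,
        ⟨ht, Or.inl (hyt.trans (List.prefix_append _ _))⟩⟩
  refine ⟨⟨y, hy, Or.inl (List.prefix_refl y)⟩, ?_, ?_⟩
  · rintro s t hst ⟨htU, hyt | hty⟩
    · exact ⟨hUtree hst htU, (List.prefix_or_prefix_of_prefix hst hyt).symm⟩
    · exact ⟨hUtree hst htU, Or.inr (hst.trans hty)⟩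
  · rintro s ⟨hsU, hys | hsy⟩
    · obtain ⟨t, htU, hst, hsplit⟩ := hUsplit s hsU
      exact ⟨t, ⟨htU, Or.inl (hys.trans hst)⟩, hst,
        splits_of_above t htU (hys.trans hst) hsplit⟩
    · obtain ⟨t, htU, hyt, hsplit⟩ := hUsplit y hy
      exact ⟨t, ⟨htU, Or.inl hyt⟩, hsy.trans hyt, splits_of_above t htU hyt hsplit⟩

theorem restrictTo_subset_of_forall_prefix {U A : Set (List Bool)} (hA : IsTree A)
    {y : List Bool} (hy : y ∈ U) (h : ∀ z ∈ U, y <+: z → z ∈ A) : restrictTo U y ⊆ A := by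
  rintro z ⟨hzU, hyz | hzy⟩
  · exact h z hzU hyz
  · exact hA hzy (h y hy (List.prefix_refl y))

theorem exists_restrictTo_subset_or {U T S : Set (List Bool)} (hT : IsTree T) (hS : IsTree S)
    (hU : U ⊆ T ∪ S) {x : List Bool} (hx : x ∈ U) :
    (∃ y ∈ U, x <+: y ∧ restrictTo U y ⊆ T) ∨ restrictTo U x ⊆ S := by
  by_cases hstays : ∃ y ∈ U, x <+: y ∧ ∀ z ∈ U, y <+: z → z ∈ T
  · obtain ⟨y, hy, hxy, hyT⟩ := hstays
    exact Or.inl ⟨y, hy, hxy, restrictTo_subset_of_forall_prefix hT hy hyT⟩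
  · push Not at hstays
    refine Or.inr (restrictTo_subset_of_forall_prefix hS hx fun z hz hxz => ?_)
    obtain ⟨w, hw, hzw, hwT⟩ := hstays z hz hxz
    exact hS hzw ((hU hw).resolve_left hwT)

theorem subset_meet {U A B : Set (List Bool)} (hU : IsPerfect U) (hUAB : U ⊆ A ∩ B) :
    U ⊆ meet A B :=
  Set.subset_sUnion_of_mem ⟨hU, hUAB⟩

theorem meet_mono_left {A A' : Set (List Bool)} (B : Set (List Bool)) (h : A ⊆ A') :
    meet A B ⊆ meet A' B :=
  Set.sUnion_mono fun _ ⟨hU, hUAB⟩ => ⟨hU, hUAB.trans (Set.inter_subset_inter_left B h)⟩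

theorem meet_union_subset {T S : Set (List Bool)} (hT : IsTree T) (hS : IsTree S)
    (R : Set (List Bool)) : meet (T ∪ S) R ⊆ meet T R ∪ meet S R := by
  rintro x ⟨U, ⟨hU, hUsub⟩, hx⟩
  have hUR : ∀ y, restrictTo U y ⊆ R := fun y =>
    (Set.sep_subset U _).trans fun z hz => (hUsub hz).2
  rcases exists_restrictTo_subset_or hT hS (fun z hz => (hUsub hz).1) hx with
    ⟨y, hy, hxy, hyT⟩ | hxS
  · exact Or.inl (subset_meet (isPerfect_restrictTo hU hy) (Set.subset_inter hyT (hUR y))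
      ⟨hx, Or.inr hxy⟩)
  · exact Or.inr (subset_meet (isPerfect_restrictTo hU hx) (Set.subset_inter hxS (hUR x))
      ⟨hx, Or.inl (List.prefix_refl x)⟩)

theorem meet_union_distrib_general (T S R : Set (List Bool))
    (hT : IsPerfect T) (hS : IsPerfect S) :
    meet (T ∪ S) R = meet T R ∪ meet S R :=
  (meet_union_subset hT.2.1 hS.2.1 R).antisymm <|
    Set.union_subset (meet_mono_left R Set.subset_union_left)
      (meet_mono_left R Set.subset_union_right)

/-- the meet distributes over unions of perfect trees. -/
theorem meet_union_distrib (T S R : Set (List Bool))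
    (hT : IsPerfect T) (hS : IsPerfect S) (hR : IsPerfect R) :
    meet (T ∪ S) R = meet T R ∪ meet S R :=
  meet_union_distrib_general T S R hT hS
end

section
/- Let P be a perfect poset, let T, S ∈ P, let m ∈ ℕ, and suppose T ∧ S ≠ ∅. Then there exist a node s of T of length m and a tree T̄ ∈ P such that T̄ ⊆ T, T̄ has exactly the same nodes of length m as T, and T̄_s ⊆ S. -/
/-- A perfect poset: a collection of perfect trees containing all cones and
closed under unions and (nonempty) meets. -/
def PerfectPoset (P : Set (Set (List Bool))) : Prop :=
  (∀ T ∈ P, IsPerfect T) ∧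
  (∀ s : List Bool, Cone s ∈ P) ∧
  (∀ T ∈ P, ∀ S ∈ P, T ∪ S ∈ P) ∧
  (∀ T ∈ P, ∀ S ∈ P, meet T S ≠ ∅ → meet T S ∈ P)

/-- `T` and `S` are compatible in `P` if some `U ∈ P` is contained in both. -/
def CompatIn (P : Set (Set (List Bool))) (T S : Set (List Bool)) : Prop :=
  ∃ U ∈ P, U ⊆ T ∧ U ⊆ S

lemma Set.union_biUnion_mem_of_union_mem {α ι : Type*} {P : Set (Set α)}
    (hP : ∀ A ∈ P, ∀ B ∈ P, A ∪ B ∈ P) {A : Set α} (hA : A ∈ P) {F : Set ι} (hF : F.Finite)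
    {f : ι → Set α} (hf : ∀ i ∈ F, f i ∈ P) : A ∪ ⋃ i ∈ F, f i ∈ P := by
  induction F, hF using Set.Finite.induction_on with
  | empty => simpa using hA
  | @insert a F _ _ ih =>
    rw [Set.biUnion_insert, Set.union_left_comm]
    exact hP _ (hf a (Set.mem_insert a F)) _ (ih fun i hi ↦ hf i (Set.mem_insert_of_mem a hi))

lemma List.prefix_of_comparable_of_length_eq {α : Type*} {s t x : List α} (hst : s ≠ t)
    (hlen : s.length = t.length) (hs : s <+: x ∨ x <+: s) (ht : t <+: x ∨ x <+: t) :
    x <+: s := by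
  refine hs.resolve_left fun hsx ↦ hst ?_
  rcases ht with htx | hxt
  · exact (List.prefix_of_prefix_length_le hsx htx hlen.le).eq_of_length hlen
  · exact (hsx.trans hxt).eq_of_length hlen

lemma IsPerfect.exists_length_eq {T : Set (List Bool)} (hT : IsPerfect T) (m : ℕ) :
    ∃ s ∈ T, s.length = m := by
  induction m with
  | zero => obtain ⟨u, hu⟩ := hT.1; exact ⟨[], hT.2.1 u.nil_prefix hu, rfl⟩
  | succ m ih =>
    obtain ⟨u, hu, rfl⟩ := ih
    obtain ⟨t, -, hut, hsplit⟩ := hT.2.2 u hu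
    refine ⟨(t ++ [true]).take (u.length + 1), hT.2.1 (List.take_prefix _ _) hsplit.2, ?_⟩
    simp only [List.length_take, List.length_append, List.length_singleton]
    have := hut.length_le
    omega

lemma restrictTo_subset (T : Set (List Bool)) (s : List Bool) : restrictTo T s ⊆ T :=
  fun _ h ↦ h.1

lemma self_mem_restrictTo {T : Set (List Bool)} {s : List Bool} (hs : s ∈ T) :
    s ∈ restrictTo T s :=
  ⟨hs, Or.inl List.prefix_rfl⟩

lemma isPerfect_restrictTo_s16 {T : Set (List Bool)} {s : List Bool} (hT : IsPerfect T)
    (hs : s ∈ T) : IsPerfect (restrictTo T s) := by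
  refine ⟨⟨s, self_mem_restrictTo hs⟩, ?_, ?_⟩
  · rintro a b hab ⟨hbT, hsb | hbs⟩
    · exact ⟨hT.2.1 hab hbT, (List.prefix_or_prefix_of_prefix hab hsb).symm⟩
    · exact ⟨hT.2.1 hab hbT, Or.inr (hab.trans hbs)⟩
  · have splitting_above : ∀ a, s <+: a → a ∈ T →
        ∃ t ∈ restrictTo T s, a <+: t ∧ Splits (restrictTo T s) t := by
      intro a hsa haT
      obtain ⟨t, htT, hat, hfalse, htrue⟩ := hT.2.2 a haT
      have hst := hsa.trans hat
      exact ⟨t, ⟨htT, Or.inl hst⟩, hat, ⟨hfalse, Or.inl (hst.trans (t.prefix_append _))⟩,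
        ⟨htrue, Or.inl (hst.trans (t.prefix_append _))⟩⟩
    rintro a ⟨haT, hsa | has⟩
    · exact splitting_above a hsa haT
    · obtain ⟨t, ht, hst, hsplit⟩ := splitting_above s List.prefix_rfl hs
      exact ⟨t, ht, has.trans hst, hsplit⟩

lemma meet_subset_inter (A B : Set (List Bool)) : meet A B ⊆ A ∩ B := by
  rintro u ⟨U, ⟨-, hUAB⟩, hu⟩
  exact hUAB hu

lemma meet_cone {T : Set (List Bool)} {s : List Bool} (hT : IsPerfect T) (hs : s ∈ T) :
    meet T (Cone s) = restrictTo T s :=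
  (meet_subset_inter T (Cone s)).antisymm fun _ hu ↦
    ⟨restrictTo T s, ⟨isPerfect_restrictTo_s16 hT hs, fun _ hv ↦ hv⟩, hu⟩

lemma PerfectPoset.restrictTo_mem {P : Set (Set (List Bool))} (hP : PerfectPoset P)
    {T : Set (List Bool)} {s : List Bool} (hT : T ∈ P) (hs : s ∈ T) : restrictTo T s ∈ P := by
  have hmeet := meet_cone (hP.1 T hT) hs
  rw [← hmeet]
  refine hP.2.2.2 T hT _ (hP.2.1 s) ?_
  rw [hmeet]
  exact Set.Nonempty.ne_empty ⟨s, self_mem_restrictTo hs⟩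

def graft (T M : Set (List Bool)) (s : List Bool) : Set (List Bool) :=
  restrictTo M s ∪ ⋃ t ∈ {t ∈ T | t.length = s.length ∧ t ≠ s}, restrictTo T t

section graft

variable {T M : Set (List Bool)} {s : List Bool}

lemma graft_subset (hMT : M ⊆ T) : graft T M s ⊆ T :=
  Set.union_subset ((restrictTo_subset M s).trans hMT)
    (Set.iUnion₂_subset fun t _ ↦ restrictTo_subset T t)

lemma PerfectPoset.graft_mem {P : Set (Set (List Bool))} (hP : PerfectPoset P) (hT : T ∈ P)
    (hM : M ∈ P) (hs : s ∈ M) : graft T M s ∈ P :=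
  Set.union_biUnion_mem_of_union_mem hP.2.2.1 (hP.restrictTo_mem hM hs)
    ((List.finite_length_eq Bool s.length).subset fun _ ht ↦ ht.2.1)
    fun _ ht ↦ hP.restrictTo_mem hT ht.1

lemma graft_level_eq (hMT : M ⊆ T) (hs : s ∈ M) :
    {t ∈ graft T M s | t.length = s.length} = {t ∈ T | t.length = s.length} := by
  refine Set.Subset.antisymm (fun t ht ↦ ⟨graft_subset hMT ht.1, ht.2⟩) ?_
  rintro t ⟨htT, hlen⟩
  refine ⟨?_, hlen⟩
  by_cases hts : t = s
  · subst hts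
    exact Or.inl (self_mem_restrictTo hs)
  · exact Or.inr (Set.mem_biUnion ⟨htT, hlen, hts⟩ (self_mem_restrictTo htT))

lemma restrictTo_graft_subset (hM : IsTree M) (hs : s ∈ M) :
    restrictTo (graft T M s) s ⊆ M := by
  rintro x ⟨hx | hx, hsx⟩
  · exact hx.1
  · obtain ⟨t, ⟨-, hlen, hts⟩, -, htx⟩ := Set.mem_iUnion₂.1 hx
    exact hM (List.prefix_of_comparable_of_length_eq (Ne.symm hts) hlen.symm hsx htx) hs

end graft

/-- if `T ∧ S ≠ ∅`, one can shrink `T` in `P`, preserving its nodes of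
length `m`, so that below some length-`m` node the result is contained in `S`. -/
theorem shrink_into_compatible (P : Set (Set (List Bool)))
    (hP : PerfectPoset P) (T S : Set (List Bool)) (hT : T ∈ P) (hS : S ∈ P)
    (m : ℕ) (h : meet T S ≠ ∅) :
    ∃ s ∈ T, s.length = m ∧ ∃ Tbar ∈ P, Tbar ⊆ T ∧
      {t ∈ Tbar | t.length = m} = {t ∈ T | t.length = m} ∧
      restrictTo Tbar s ⊆ S := by
  have hMP : meet T S ∈ P := hP.2.2.2 T hT S hS h
  have hM : IsPerfect (meet T S) := hP.1 _ hMP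
  have hMT : meet T S ⊆ T := fun _ hu ↦ (meet_subset_inter T S hu).1
  have hMS : meet T S ⊆ S := fun _ hu ↦ (meet_subset_inter T S hu).2
  obtain ⟨s, hs, rfl⟩ := hM.exists_length_eq m
  exact ⟨s, hMT hs, rfl, graft T (meet T S) s, hP.graft_mem hT hMP hs, graft_subset hMT,
    graft_level_eq hMT hs, (restrictTo_graft_subset hM.2.1 hs).trans hMS⟩
end
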